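/- arXiv:1711.08448 — 2 statements merged into one kernel-verified Lean document; each statement's English description precedes it below -/
import Mathlib

section
/- Let x, u ∈ ℝᵐ be positive vectors with ‖x‖₁ = ‖u‖₁ = 1. Then ‖x − u‖_∞ ≤ d(x, u), where d is the Hilbert projective metric d(x,u) = ln((max_i x_i/u_i)(max_j u_j/x_j)). -/
/-- The Hilbert projective metric on positive vectors. -/
noncomputable def hilbertDist {m : ℕ} (x u : Fin m → ℝ) : ℝ :=
  Real.log ((⨆ i, x i / u i) * (⨆ j, u j / x j))

lemma exp_sub_exp_le {a b : ℝ} (hab : a ≤ b) :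
    Real.exp b - Real.exp a ≤ (b - a) * Real.exp b := by
  have h1 : 1 + (a - b) ≤ Real.exp (a - b) := by linarith [Real.add_one_le_exp (a - b)]
  have h2 : Real.exp a = Real.exp b * Real.exp (a - b) := by
    rw [← Real.exp_add]; ring_nf
  nlinarith [Real.exp_pos b, Real.exp_pos (a - b)]

lemma abs_exp_sub_exp (a b : ℝ) :
    |Real.exp a - Real.exp b| ≤ |a - b| * max (Real.exp a) (Real.exp b) := by
  rcases le_total a b with h | h
  · rw [abs_sub_comm, abs_of_nonneg (sub_nonneg.2 (Real.exp_le_exp.2 h)),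
      abs_sub_comm, abs_of_nonneg (by linarith : (0:ℝ) ≤ b - a)]
    have hh := le_max_right (Real.exp a) (Real.exp b)
    nlinarith [exp_sub_exp_le h, Real.exp_pos b, sub_nonneg.2 h]
  · rw [abs_of_nonneg (sub_nonneg.2 (Real.exp_le_exp.2 h)),
      abs_of_nonneg (by linarith : (0:ℝ) ≤ a - b)]
    have hh := le_max_left (Real.exp a) (Real.exp b)
    nlinarith [exp_sub_exp_le h, Real.exp_pos a, sub_nonneg.2 h]

/-- For ℓ¹-normalized positive vectors x, u in ℝᵐ,
‖x − u‖_∞ ≤ d(x,u). -/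
theorem stmt7 {m : ℕ} (hm : 0 < m) (x u : Fin m → ℝ)
    (hx : ∀ i, 0 < x i) (hu : ∀ i, 0 < u i)
    (hx1 : ∑ i, x i = 1) (hu1 : ∑ i, u i = 1) :
    (⨆ i, |x i - u i|) ≤ hilbertDist x u := by
  haveI : Nonempty (Fin m) := ⟨⟨0, hm⟩⟩
  have hbdd1 : BddAbove (Set.range fun i => x i / u i) :=
    (Set.finite_range _).bddAbove
  have hbdd2 : BddAbove (Set.range fun j => u j / x j) :=
    (Set.finite_range _).bddAbove
  set S1 := ⨆ i, x i / u i with hS1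
  set S2 := ⨆ j, u j / x j with hS2
  -- there is an index with x i ≥ u i
  have hex1 : ∃ i, u i ≤ x i := by
    by_contra h
    push_neg at h
    have : (∑ i, x i) < ∑ i, u i :=
      Finset.sum_lt_sum_of_nonempty (Finset.univ_nonempty) (fun i _ => h i)
    rw [hx1, hu1] at this; exact lt_irrefl _ this
  have hex2 : ∃ i, x i ≤ u i := by
    by_contra h
    push_neg at h
    have : (∑ i, u i) < ∑ i, x i :=
      Finset.sum_lt_sum_of_nonempty (Finset.univ_nonempty) (fun i _ => h i)
    rw [hx1, hu1] at this; exact lt_irrefl _ this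
  have hS1ge : 1 ≤ S1 := by
    obtain ⟨i, hi⟩ := hex1
    exact le_trans ((one_le_div (hu i)).2 hi) (le_ciSup hbdd1 i)
  have hS2ge : 1 ≤ S2 := by
    obtain ⟨i, hi⟩ := hex2
    exact le_trans ((one_le_div (hx i)).2 hi) (le_ciSup hbdd2 i)
  have hS1pos : 0 < S1 := lt_of_lt_of_le one_pos hS1ge
  have hS2pos : 0 < S2 := lt_of_lt_of_le one_pos hS2ge
  have hd : hilbertDist x u = Real.log S1 + Real.log S2 := by
    rw [hilbertDist, Real.log_mul (ne_of_gt hS1pos) (ne_of_gt hS2pos)]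
  have hlog1 : 0 ≤ Real.log S1 := Real.log_nonneg hS1ge
  have hlog2 : 0 ≤ Real.log S2 := Real.log_nonneg hS2ge
  apply ciSup_le
  intro i
  have hxle : x i ≤ 1 := by
    rw [← hx1]
    exact Finset.single_le_sum (fun j _ => (hx j).le) (Finset.mem_univ i)
  have hule : u i ≤ 1 := by
    rw [← hu1]
    exact Finset.single_le_sum (fun j _ => (hu j).le) (Finset.mem_univ i)
  have key : |x i - u i| ≤ |Real.log (x i) - Real.log (u i)| := by
    have := abs_exp_sub_exp (Real.log (x i)) (Real.log (u i))
    rw [Real.exp_log (hx i), Real.exp_log (hu i)] at this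
    have hmax : max (x i) (u i) ≤ 1 := max_le hxle hule
    calc |x i - u i| ≤ |Real.log (x i) - Real.log (u i)| * max (x i) (u i) := this
      _ ≤ |Real.log (x i) - Real.log (u i)| * 1 :=
          mul_le_mul_of_nonneg_left hmax (abs_nonneg _)
      _ = _ := mul_one _
  refine key.trans ?_
  rw [hd, abs_sub_le_iff]
  constructor
  · have h1 : Real.log (x i) - Real.log (u i) = Real.log (x i / u i) := by
      rw [Real.log_div (ne_of_gt (hx i)) (ne_of_gt (hu i))]
    rw [h1]
    have : Real.log (x i / u i) ≤ Real.log S1 :=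
      Real.log_le_log (div_pos (hx i) (hu i)) (le_ciSup hbdd1 i)
    linarith
  · have h1 : Real.log (u i) - Real.log (x i) = Real.log (u i / x i) := by
      rw [Real.log_div (ne_of_gt (hu i)) (ne_of_gt (hx i))]
    rw [h1]
    have : Real.log (u i / x i) ≤ Real.log S2 :=
      Real.log_le_log (div_pos (hu i) (hx i)) (le_ciSup hbdd2 i)
    linarith
end

section
/- Let f be an order-preserving multi-homogeneous map on pairs of positive vectors with nonnegative homogeneity matrix Θ ∈ ℝ^{2×2}, and let b = (b₁, b₂) > 0. Then for all positive pairs (x,t), (u,v): δ_b(f(x,t), f(u,v)) ≤ max{(Θᵀb)₁/b₁, (Θᵀb)₂/b₂} · δ_b((x,t),(u,v)), where δ_b((x,t),(u,v)) = b₁ d(x,u) + b₂ d(t,v) is the weighted product Hilbert metric. -/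
lemma sup_ratio_pos {m : ℕ} (hm : 0 < m) (x u : Fin m → ℝ)
    (hx : ∀ i, 0 < x i) (hu : ∀ i, 0 < u i) : 0 < ⨆ i, x i / u i := by
  haveI : Nonempty (Fin m) := ⟨⟨0, hm⟩⟩
  exact lt_of_lt_of_le (div_pos (hx (Classical.arbitrary _)) (hu _))
    (le_ciSup (f := fun j => x j / u j) (Set.finite_range _).bddAbove _)

lemma le_sup_mul {m : ℕ} (hm : 0 < m) (x u : Fin m → ℝ)
    (hx : ∀ i, 0 < x i) (hu : ∀ i, 0 < u i) (i : Fin m) :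
    x i ≤ (⨆ j, x j / u j) * u i := by
  haveI : Nonempty (Fin m) := ⟨⟨0, hm⟩⟩
  have h : x i / u i ≤ ⨆ j, x j / u j := le_ciSup (f := fun j => x j / u j) (Set.finite_range _).bddAbove i
  rw [div_le_iff₀ (hu i)] at h
  exact h

lemma one_le_sup_mul_sup {m : ℕ} (hm : 0 < m) (x u : Fin m → ℝ)
    (hx : ∀ i, 0 < x i) (hu : ∀ i, 0 < u i) :
    1 ≤ (⨆ i, x i / u i) * (⨆ j, u j / x j) := by
  haveI : Nonempty (Fin m) := ⟨⟨0, hm⟩⟩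
  set i := Classical.arbitrary (Fin m)
  have h1 : x i / u i ≤ ⨆ j, x j / u j := le_ciSup (f := fun j => x j / u j) (Set.finite_range _).bddAbove i
  have h2 : u i / x i ≤ ⨆ j, u j / x j := le_ciSup (f := fun j => u j / x j) (Set.finite_range _).bddAbove i
  have : (x i / u i) * (u i / x i) = 1 := by
    rw [div_mul_div_comm, mul_comm]
    exact div_self (ne_of_gt (mul_pos (hu i) (hx i)))
  calc (1:ℝ) = (x i / u i) * (u i / x i) := this.symm
    _ ≤ (⨆ j, x j / u j) * (⨆ j, u j / x j) :=
      mul_le_mul h1 h2 (div_nonneg (hu i).le (hx i).le)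
        (le_of_lt (sup_ratio_pos hm x u hx hu))

lemma hilbertDist_nonneg {m : ℕ} (hm : 0 < m) (x u : Fin m → ℝ)
    (hx : ∀ i, 0 < x i) (hu : ∀ i, 0 < u i) : 0 ≤ hilbertDist x u :=
  Real.log_nonneg (one_le_sup_mul_sup hm x u hx hu)

lemma key_bound {m n L : ℕ} (hm : 0 < m) (hn : 0 < n) (hL : 0 < L)
    (g : (Fin n → ℝ) → (Fin L → ℝ) → Fin m → ℝ) (a c : ℝ)
    (gpos : ∀ x t, (∀ i, 0 < x i) → (∀ ℓ, 0 < t ℓ) → ∀ i, 0 < g x t i)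
    (ghom : ∀ (c₁ c₂ : ℝ), 0 < c₁ → 0 < c₂ → ∀ x t, (∀ i, 0 < x i) → (∀ ℓ, 0 < t ℓ) →
      ∀ i, g (fun j => c₁ * x j) (fun ℓ => c₂ * t ℓ) i = c₁ ^ a * c₂ ^ c * g x t i)
    (gord : ∀ x t u v, (∀ i, 0 < x i) → (∀ ℓ, 0 < t ℓ) → (∀ i, 0 < u i) → (∀ ℓ, 0 < v ℓ) →
      (∀ i, x i ≤ u i) → (∀ ℓ, t ℓ ≤ v ℓ) → ∀ i, g x t i ≤ g u v i)
    (x u : Fin n → ℝ) (t v : Fin L → ℝ)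
    (hx : ∀ i, 0 < x i) (ht : ∀ ℓ, 0 < t ℓ)
    (hu : ∀ i, 0 < u i) (hv : ∀ ℓ, 0 < v ℓ) :
    hilbertDist (g x t) (g u v) ≤ a * hilbertDist x u + c * hilbertDist t v := by
  haveI : Nonempty (Fin m) := ⟨⟨0, hm⟩⟩
  haveI : Nonempty (Fin n) := ⟨⟨0, hn⟩⟩
  haveI : Nonempty (Fin L) := ⟨⟨0, hL⟩⟩
  set β := ⨆ i, x i / u i with hβ
  set β' := ⨆ i, u i / x i with hβ'
  set γ := ⨆ ℓ, t ℓ / v ℓ with hγ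
  set γ' := ⨆ ℓ, v ℓ / t ℓ with hγ'
  have hβp : 0 < β := sup_ratio_pos hn x u hx hu
  have hβ'p : 0 < β' := sup_ratio_pos hn u x hu hx
  have hγp : 0 < γ := sup_ratio_pos hL t v ht hv
  have hγ'p : 0 < γ' := sup_ratio_pos hL v t hv ht
  -- forward bound
  have fwd : ∀ i, g x t i ≤ β ^ a * γ ^ c * g u v i := by
    intro i
    have h1 : g x t i ≤ g (fun j => β * u j) (fun ℓ => γ * v ℓ) i :=
      gord x t _ _ hx ht (fun j => mul_pos hβp (hu j)) (fun ℓ => mul_pos hγp (hv ℓ))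
        (fun j => le_sup_mul hn x u hx hu j) (fun ℓ => le_sup_mul hL t v ht hv ℓ) i
    rw [ghom β γ hβp hγp u v hu hv i] at h1
    exact h1
  have bwd : ∀ i, g u v i ≤ β' ^ a * γ' ^ c * g x t i := by
    intro i
    have h1 : g u v i ≤ g (fun j => β' * x j) (fun ℓ => γ' * t ℓ) i :=
      gord u v _ _ hu hv (fun j => mul_pos hβ'p (hx j)) (fun ℓ => mul_pos hγ'p (ht ℓ))
        (fun j => le_sup_mul hn u x hu hx j) (fun ℓ => le_sup_mul hL v t hv ht ℓ) i
    rw [ghom β' γ' hβ'p hγ'p x t hx ht i] at h1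
    exact h1
  have hgxt := gpos x t hx ht
  have hguv := gpos u v hu hv
  have S1le : (⨆ i, g x t i / g u v i) ≤ β ^ a * γ ^ c := by
    apply ciSup_le
    intro i
    rw [div_le_iff₀ (hguv i)]
    exact fwd i
  have S2le : (⨆ i, g u v i / g x t i) ≤ β' ^ a * γ' ^ c := by
    apply ciSup_le
    intro i
    rw [div_le_iff₀ (hgxt i)]
    exact bwd i
  have S1p : 0 < ⨆ i, g x t i / g u v i := sup_ratio_pos hm _ _ hgxt hguv
  have S2p : 0 < ⨆ i, g u v i / g x t i := sup_ratio_pos hm _ _ hguv hgxt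
  have hr1 : (0:ℝ) < β ^ a * γ ^ c := mul_pos (Real.rpow_pos_of_pos hβp a) (Real.rpow_pos_of_pos hγp c)
  have hr2 : (0:ℝ) < β' ^ a * γ' ^ c := mul_pos (Real.rpow_pos_of_pos hβ'p a) (Real.rpow_pos_of_pos hγ'p c)
  have step : hilbertDist (g x t) (g u v) ≤
      Real.log ((β ^ a * γ ^ c) * (β' ^ a * γ' ^ c)) := by
    unfold hilbertDist
    apply Real.log_le_log (mul_pos S1p S2p)
    exact mul_le_mul S1le S2le S2p.le hr1.le
  have expand : Real.log ((β ^ a * γ ^ c) * (β' ^ a * γ' ^ c))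
      = a * (Real.log β + Real.log β') + c * (Real.log γ + Real.log γ') := by
    rw [Real.log_mul (ne_of_gt hr1) (ne_of_gt hr2),
      Real.log_mul (ne_of_gt (Real.rpow_pos_of_pos hβp a)) (ne_of_gt (Real.rpow_pos_of_pos hγp c)),
      Real.log_mul (ne_of_gt (Real.rpow_pos_of_pos hβ'p a)) (ne_of_gt (Real.rpow_pos_of_pos hγ'p c)),
      Real.log_rpow hβp, Real.log_rpow hγp, Real.log_rpow hβ'p, Real.log_rpow hγ'p]
    ring
  have hd1 : hilbertDist x u = Real.log β + Real.log β' := by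
    unfold hilbertDist
    rw [← hβ, ← hβ', Real.log_mul (ne_of_gt hβp) (ne_of_gt hβ'p)]
  have hd2 : hilbertDist t v = Real.log γ + Real.log γ' := by
    unfold hilbertDist
    rw [← hγ, ← hγ', Real.log_mul (ne_of_gt hγp) (ne_of_gt hγ'p)]
  rw [hd1, hd2]
  calc hilbertDist (g x t) (g u v) ≤ _ := step
    _ = _ := expand


/-- An order-preserving multi-homogeneous map f = (f₁,f₂) with nonnegative
homogeneity matrix Θ is Lipschitz with constant max{(Θᵀb)₁/b₁, (Θᵀb)₂/b₂} with respect
to the weighted product Hilbert metric δ_b((x,t),(u,v)) = b₁ d(x,u) + b₂ d(t,v). -/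
theorem stmt9 {n L : ℕ} (hn : 0 < n) (hL : 0 < L)
    (f₁ : (Fin n → ℝ) → (Fin L → ℝ) → Fin n → ℝ)
    (f₂ : (Fin n → ℝ) → (Fin L → ℝ) → Fin L → ℝ)
    (Θ : Matrix (Fin 2) (Fin 2) ℝ) (hΘ : ∀ i j, 0 ≤ Θ i j)
    (b₁ b₂ : ℝ) (hb₁ : 0 < b₁) (hb₂ : 0 < b₂)
    (hpos : ∀ x t, (∀ i, 0 < x i) → (∀ ℓ, 0 < t ℓ) →
      (∀ i, 0 < f₁ x t i) ∧ (∀ ℓ, 0 < f₂ x t ℓ))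
    (hhom : ∀ (c c' : ℝ), 0 < c → 0 < c' → ∀ x t, (∀ i, 0 < x i) → (∀ ℓ, 0 < t ℓ) →
      (∀ i, f₁ (fun j => c * x j) (fun ℓ => c' * t ℓ) i
          = c ^ (Θ 0 0) * c' ^ (Θ 0 1) * f₁ x t i) ∧
      (∀ ℓ, f₂ (fun j => c * x j) (fun ℓ' => c' * t ℓ') ℓ
          = c ^ (Θ 1 0) * c' ^ (Θ 1 1) * f₂ x t ℓ))
    (hord : ∀ x t u v, (∀ i, 0 < x i) → (∀ ℓ, 0 < t ℓ) →
      (∀ i, 0 < u i) → (∀ ℓ, 0 < v ℓ) →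
      (∀ i, x i ≤ u i) → (∀ ℓ, t ℓ ≤ v ℓ) →
      (∀ i, f₁ x t i ≤ f₁ u v i) ∧ (∀ ℓ, f₂ x t ℓ ≤ f₂ u v ℓ))
    (x u : Fin n → ℝ) (t v : Fin L → ℝ)
    (hx : ∀ i, 0 < x i) (ht : ∀ ℓ, 0 < t ℓ)
    (hu : ∀ i, 0 < u i) (hv : ∀ ℓ, 0 < v ℓ) :
    b₁ * hilbertDist (f₁ x t) (f₁ u v) + b₂ * hilbertDist (f₂ x t) (f₂ u v) ≤
      max ((Θ 0 0 * b₁ + Θ 1 0 * b₂) / b₁) ((Θ 0 1 * b₁ + Θ 1 1 * b₂) / b₂) *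
        (b₁ * hilbertDist x u + b₂ * hilbertDist t v) := by

  have hD1 := key_bound hn hn hL f₁ (Θ 0 0) (Θ 0 1)
    (fun x t hx ht => (hpos x t hx ht).1)
    (fun c₁ c₂ hc₁ hc₂ x t hx ht => (hhom c₁ c₂ hc₁ hc₂ x t hx ht).1)
    (fun x t u v hx ht hu hv hxu htv => (hord x t u v hx ht hu hv hxu htv).1)
    x u t v hx ht hu hv
  have hD2 := key_bound hL hn hL f₂ (Θ 1 0) (Θ 1 1)
    (fun x t hx ht => (hpos x t hx ht).2)
    (fun c₁ c₂ hc₁ hc₂ x t hx ht => (hhom c₁ c₂ hc₁ hc₂ x t hx ht).2)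
    (fun x t u v hx ht hu hv hxu htv => (hord x t u v hx ht hu hv hxu htv).2)
    x u t v hx ht hu hv
  have hd1 : 0 ≤ hilbertDist x u := hilbertDist_nonneg hn x u hx hu
  have hd2 : 0 ≤ hilbertDist t v := hilbertDist_nonneg hL t v ht hv
  set K := max ((Θ 0 0 * b₁ + Θ 1 0 * b₂) / b₁) ((Θ 0 1 * b₁ + Θ 1 1 * b₂) / b₂) with hK
  have h1 : Θ 0 0 * b₁ + Θ 1 0 * b₂ ≤ K * b₁ := by
    rw [← div_le_iff₀ hb₁]
    exact le_max_left _ _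
  have h2 : Θ 0 1 * b₁ + Θ 1 1 * b₂ ≤ K * b₂ := by
    rw [← div_le_iff₀ hb₂]
    exact le_max_right _ _
  nlinarith [mul_le_mul_of_nonneg_left hD1 hb₁.le, mul_le_mul_of_nonneg_left hD2 hb₂.le,
    mul_le_mul_of_nonneg_right h1 hd1, mul_le_mul_of_nonneg_right h2 hd2]
end
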